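/- arXiv:1906.08159 — 5 statements merged into one kernel-verified Lean document; each statement's English description precedes it below -/
import Mathlib

section
/- Let H be a complex separable Hilbert space with Hilbert basis (v_k)_{k∈ℕ}, let λ : ℕ → ℝ satisfy λ_k ≥ 1 for all k, let T > 0, and let r ∈ ℂ with Re r ≠ 0. Let μ ∈ H with coefficients γ_k := ⟨v_k, μ⟩ satisfy Σ_k λ_k³ |γ_k|² < ∞. Define ξ_k := (r − i λ_k) γ_k / (e^{(r − i λ_k)T} − 1) and u(t) := Σ_k e^{−i λ_k t} ξ_k v_k. Then Σ_k λ_k |⟨v_k, u(t)⟩|² < ∞ for every t ∈ [0,T], and there is a constant c > 0 depending only on r and T such that sup_{t∈[0,T]} Σ_k λ_k |⟨v_k, u(t)⟩|² ≤ c · Σ_k λ_k³ |γ_k|². -/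
/-!
The `k`-th coefficient of `u(t)` is `ξ_k` up to a unimodular factor. Since
`|e^{(r - iλ)T} - 1| ≥ |e^{Re r · T} - 1| > 0` uniformly in `λ`, and `|r - iλ| ≤ (|r| + 1) λ`
for `λ ≥ 1`, each coefficient obeys `λ |ξ_k|² ≤ c λ³ |γ_k|²` with
`c = (|r| + 1)² / |e^{Re r · T} - 1|²`; summing gives the estimate.
-/

open Complex

theorem HilbertBasis.repr_apply_of_hasSum {ι 𝕜 E : Type*} [RCLike 𝕜] [NormedAddCommGroup E]
    [InnerProductSpace 𝕜 E] (b : HilbertBasis ι 𝕜 E) {a : ι → 𝕜} {x : E}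
    (h : HasSum (fun i => a i • b i) x) (i : ι) : b.repr x i = a i := by
  classical
  have hinner : HasSum (fun j => (inner 𝕜 (b i) (a j • b j) : 𝕜)) (inner 𝕜 (b i) x) :=
    (innerSL 𝕜 (b i)).hasSum h
  have hsingle :
      (fun j => (inner 𝕜 (b i) (a j • b j) : 𝕜)) = fun j => if j = i then a i else 0 := by
    funext j
    rw [inner_smul_right, orthonormal_iff_ite.mp b.orthonormal]
    rcases eq_or_ne j i with rfl | hji
    · simp
    · simp [hji, Ne.symm hji]
  rw [b.repr_apply_apply]
  exact hinner.unique (hsingle ▸ hasSum_ite_eq i (a i))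

theorem abs_exp_re_sub_one_le_norm_exp_sub_one (z : ℂ) :
    |Real.exp z.re - 1| ≤ ‖exp z - 1‖ := by
  simpa [norm_exp] using abs_norm_sub_norm_le (exp z) 1

theorem norm_sub_I_mul_ofReal_le (r : ℂ) {x : ℝ} (hx : 1 ≤ x) :
    ‖r - I * x‖ ≤ (‖r‖ + 1) * x := by
  calc ‖r - I * x‖ ≤ ‖r‖ + ‖I * (x : ℂ)‖ := norm_sub_le _ _
    _ = ‖r‖ + x := by simp [abs_of_nonneg (zero_le_one.trans hx)]
    _ ≤ (‖r‖ + 1) * x := by nlinarith [norm_nonneg r]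

theorem norm_exp_neg_I_mul_ofReal_mul (x t : ℝ) : ‖exp (-(I * x * t))‖ = 1 := by
  simp [norm_exp]

section

variable (r : ℂ) (T : ℝ)

noncomputable def expReGap : ℝ := |Real.exp (r.re * T) - 1|

theorem expReGap_le (x : ℝ) : expReGap r T ≤ ‖exp ((r - I * x) * T) - 1‖ := by
  simpa [expReGap, mul_re, sub_re] using
    abs_exp_re_sub_one_le_norm_exp_sub_one ((r - I * x) * T)

noncomputable def regularityConst : ℝ := (‖r‖ + 1) ^ 2 / expReGap r T ^ 2

variable {r T}

theorem expReGap_pos (hr : r.re ≠ 0) (hT : T ≠ 0) : 0 < expReGap r T := by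
  rw [expReGap, abs_pos, sub_ne_zero, Ne, Real.exp_eq_one_iff]
  exact mul_ne_zero hr hT

theorem norm_coeff_le (hr : r.re ≠ 0) (hT : T ≠ 0) {x : ℝ} (hx : 1 ≤ x) (t : ℝ) (γ : ℂ) :
    ‖exp (-(I * x * t)) * ((r - I * x) * γ / (exp ((r - I * x) * T) - 1))‖ ≤
      (‖r‖ + 1) * x * ‖γ‖ / expReGap r T := by
  rw [norm_mul, norm_exp_neg_I_mul_ofReal_mul, one_mul, norm_div, norm_mul]
  exact div_le_div₀ (by positivity [zero_le_one.trans hx])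
    (mul_le_mul_of_nonneg_right (norm_sub_I_mul_ofReal_le r hx) (norm_nonneg γ))
    (expReGap_pos hr hT) (expReGap_le r T x)

theorem weighted_norm_coeff_sq_le (hr : r.re ≠ 0) (hT : T ≠ 0) {x : ℝ} (hx : 1 ≤ x) (t : ℝ)
    (γ : ℂ) :
    x * ‖exp (-(I * x * t)) * ((r - I * x) * γ / (exp ((r - I * x) * T) - 1))‖ ^ 2 ≤
      regularityConst r T * (x ^ 3 * ‖γ‖ ^ 2) := by
  have hx0 : 0 ≤ x := zero_le_one.trans hx
  calc _ ≤ x * ((‖r‖ + 1) * x * ‖γ‖ / expReGap r T) ^ 2 := by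
        gcongr
        exact norm_coeff_le hr hT hx t γ
    _ = regularityConst r T * (x ^ 3 * ‖γ‖ ^ 2) := by
        rw [regularityConst]
        field_simp

end

theorem stmt_1_general {H : Type*} [NormedAddCommGroup H] [InnerProductSpace ℂ H]
    (b : HilbertBasis ℕ ℂ H) (T : ℝ) (hT : 0 < T) (r : ℂ) (hr : r.re ≠ 0) :
    ∃ c > 0, ∀ (lam : ℕ → ℝ), (∀ k, 1 ≤ lam k) →
      ∀ (μ : H) (u : ℝ → H),
        Summable (fun k => lam k ^ 3 * ‖b.repr μ k‖ ^ 2) →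
        (∀ t : ℝ, HasSum (fun k =>
          (Complex.exp (-(Complex.I * lam k * t)) *
            ((r - Complex.I * lam k) * b.repr μ k /
              (Complex.exp ((r - Complex.I * lam k) * T) - 1))) • b k) (u t)) →
        ∀ t ∈ Set.Icc (0:ℝ) T,
          Summable (fun k => lam k * ‖b.repr (u t) k‖ ^ 2) ∧
          ∑' k, lam k * ‖b.repr (u t) k‖ ^ 2 ≤ c * ∑' k, lam k ^ 3 * ‖b.repr μ k‖ ^ 2 := by
  have hgap := expReGap_pos hr hT.ne'
  refine ⟨regularityConst r T, by rw [regularityConst]; positivity, ?_⟩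
  intro lam hlam μ u hsum hu t _
  have hbound : ∀ k, lam k * ‖b.repr (u t) k‖ ^ 2 ≤
      regularityConst r T * (lam k ^ 3 * ‖b.repr μ k‖ ^ 2) := fun k => by
    rw [b.repr_apply_of_hasSum (hu t) k]
    exact weighted_norm_coeff_sq_le hr hT.ne' (hlam k) t _
  have hnonneg : ∀ k, 0 ≤ lam k * ‖b.repr (u t) k‖ ^ 2 := fun k =>
    mul_nonneg (zero_le_one.trans (hlam k)) (sq_nonneg _)
  have hsum' := hsum.mul_left (regularityConst r T)
  have hsummable := hsum'.of_nonneg_of_le hnonneg hbound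
  refine ⟨hsummable, ?_⟩
  rw [← tsum_mul_left]
  exact hsummable.tsum_le_tsum hbound hsum'

/-- regularity estimate.  With `λ_k ≥ 1`, `T > 0`, `Re r ≠ 0`,
`γ_k = ⟨v_k, μ⟩` satisfying `Σ λ_k³ |γ_k|² < ∞`,
`ξ_k = (r - iλ_k) γ_k / (e^{(r - iλ_k)T} - 1)` and `u(t) = Σ_k e^{-iλ_k t} ξ_k v_k`,
one has `Σ_k λ_k |⟨v_k, u(t)⟩|² < ∞` for `t ∈ [0,T]`, with a bound
`sup_t Σ_k λ_k |⟨v_k, u(t)⟩|² ≤ c Σ_k λ_k³ |γ_k|²` where `c` depends only on `r, T`. -/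
theorem stmt_1 {H : Type*} [NormedAddCommGroup H] [InnerProductSpace ℂ H] [CompleteSpace H]
    (b : HilbertBasis ℕ ℂ H) (T : ℝ) (hT : 0 < T) (r : ℂ) (hr : r.re ≠ 0) :
    ∃ c > 0, ∀ (lam : ℕ → ℝ), (∀ k, 1 ≤ lam k) →
      ∀ (μ : H) (u : ℝ → H),
        Summable (fun k => lam k ^ 3 * ‖b.repr μ k‖ ^ 2) →
        (∀ t : ℝ, HasSum (fun k =>
          (Complex.exp (-(Complex.I * lam k * t)) *
            ((r - Complex.I * lam k) * b.repr μ k /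
              (Complex.exp ((r - Complex.I * lam k) * T) - 1))) • b k) (u t)) →
        ∀ t ∈ Set.Icc (0:ℝ) T,
          Summable (fun k => lam k * ‖b.repr (u t) k‖ ^ 2) ∧
          ∑' k, lam k * ‖b.repr (u t) k‖ ^ 2 ≤ c * ∑' k, lam k ^ 3 * ‖b.repr μ k‖ ^ 2 :=
  stmt_1_general b T hT r hr
end

section
/- Let H be a complex separable Hilbert space with Hilbert basis (v_k)_{k∈ℕ}, let λ : ℕ → ℝ, let T > 0, and let r ∈ ℂ with Re r ≠ 0. Suppose u, ũ : [0,T] → H are continuous functions such that for every k ∈ ℕ and t ∈ [0,T], ⟨v_k, u(t)⟩ = e^{−i λ_k t} ⟨v_k, u(0)⟩ and ⟨v_k, ũ(t)⟩ = e^{−i λ_k t} ⟨v_k, ũ(0)⟩, and suppose ∫₀ᵀ e^{r t} u(t) dt = ∫₀ᵀ e^{r t} ũ(t) dt (Bochner integrals in H). Then u(t) = ũ(t) for all t ∈ [0,T]. -/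
/-!
Pairing the weighted average with `v_k` gives the `k`-th initial coefficient times
`∫₀ᵀ e^{(r - iλ_k)t} dt = (e^{(r - iλ_k)T} - 1)/(r - iλ_k)`, which is nonzero because
`|e^{(r - iλ_k)T}| = e^{T Re r} ≠ 1`. So the average determines every coefficient of `u(0)`,
and the diagonal evolution then determines every coefficient of `u(t)`.
-/

open Complex intervalIntegral

theorem HilbertBasis.repr_intervalIntegral {ι 𝕜 H : Type*} [RCLike 𝕜] [NormedAddCommGroup H]
    [InnerProductSpace 𝕜 H] [NormedSpace ℝ H] [CompleteSpace H] (b : HilbertBasis ι 𝕜 H)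
    {f : ℝ → H} {a c : ℝ} (hf : IntervalIntegrable f MeasureTheory.volume a c) (k : ι) :
    b.repr (∫ t in a..c, f t) k = ∫ t in a..c, b.repr (f t) k := by
  simp only [b.repr_apply_apply]
  exact ((innerSL 𝕜 (b k)).intervalIntegral_comp_comm hf).symm

theorem Complex.intervalIntegral_exp_mul_ne_zero {s : ℂ} (hs : s.re ≠ 0) {T : ℝ} (hT : T ≠ 0) :
    ∫ t in (0:ℝ)..T, exp (s * t) ≠ 0 := by
  have hs0 : s ≠ 0 := fun h => hs (by simp [h])
  rw [integral_exp_mul_complex hs0, ofReal_zero, mul_zero, exp_zero]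
  refine div_ne_zero (sub_ne_zero.mpr fun h => ?_) hs0
  have hnorm := congrArg norm h
  rw [norm_exp, norm_one, Real.exp_eq_one_iff, re_mul_ofReal] at hnorm
  exact mul_ne_zero hs hT hnorm

/-- `u` solves `(1/i) u' = A u` for the operator `A v_k = -λ_k v_k`, written coefficientwise. -/
def IsDiagonalSchrodingerSolution {H : Type*} [NormedAddCommGroup H] [InnerProductSpace ℂ H]
    [CompleteSpace H] (b : HilbertBasis ℕ ℂ H) (lam : ℕ → ℝ) (T : ℝ) (u : ℝ → H) : Prop :=
  ∀ k, ∀ t ∈ Set.Icc (0:ℝ) T, b.repr (u t) k = exp (-(I * lam k * t)) * b.repr (u 0) k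

section

variable {H : Type*} [NormedAddCommGroup H] [InnerProductSpace ℂ H] [CompleteSpace H]
  {b : HilbertBasis ℕ ℂ H} {lam : ℕ → ℝ} {T : ℝ} {u : ℝ → H}

theorem IsDiagonalSchrodingerSolution.repr_weightedAverage
    (hu : IsDiagonalSchrodingerSolution b lam T u) (hT : 0 ≤ T)
    (hcont : ContinuousOn u (Set.Icc 0 T)) (r : ℂ) (k : ℕ) :
    b.repr (∫ t in (0:ℝ)..T, exp (r * t) • u t) k =
      (∫ t in (0:ℝ)..T, exp ((r - I * lam k) * t)) * b.repr (u 0) k := by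
  rw [← Set.uIcc_of_le hT] at hcont
  have hint : IntervalIntegrable (fun t : ℝ => exp (r * t) • u t) MeasureTheory.volume 0 T :=
    ((continuous_exp.comp (continuous_const.mul continuous_ofReal)).continuousOn.smul
      hcont).intervalIntegrable
  rw [b.repr_intervalIntegral hint, ← integral_mul_const]
  refine integral_congr fun t ht => ?_
  rw [Set.uIcc_of_le hT] at ht
  simp only [map_smul, lp.coeFn_smul, Pi.smul_apply, smul_eq_mul, hu k t ht, ← mul_assoc,
    ← exp_add]
  ring_nf

end

/-- uniqueness in Theorem 1.  Two continuous solutions of the Schrödinger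
equation (in the diagonal form `⟨v_k, u(t)⟩ = e^{-iλ_k t} ⟨v_k, u(0)⟩`) having the same
weighted time-average `∫₀ᵀ e^{rt} u(t) dt` coincide on `[0, T]`, provided `Re r ≠ 0`. -/
theorem stmt_2 {H : Type*} [NormedAddCommGroup H] [InnerProductSpace ℂ H] [CompleteSpace H]
    (b : HilbertBasis ℕ ℂ H) (lam : ℕ → ℝ) (T : ℝ) (hT : 0 < T)
    (r : ℂ) (hr : r.re ≠ 0) (u v : ℝ → H)
    (hucont : ContinuousOn u (Set.Icc 0 T)) (hvcont : ContinuousOn v (Set.Icc 0 T))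
    (hu : ∀ k, ∀ t ∈ Set.Icc (0:ℝ) T,
      b.repr (u t) k = Complex.exp (-(Complex.I * lam k * t)) * b.repr (u 0) k)
    (hv : ∀ k, ∀ t ∈ Set.Icc (0:ℝ) T,
      b.repr (v t) k = Complex.exp (-(Complex.I * lam k * t)) * b.repr (v 0) k)
    (hint : (∫ t in (0:ℝ)..T, Complex.exp (r * t) • u t) =
      ∫ t in (0:ℝ)..T, Complex.exp (r * t) • v t) :
    ∀ t ∈ Set.Icc (0:ℝ) T, u t = v t := by
  have hinit : ∀ k, b.repr (u 0) k = b.repr (v 0) k := fun k => by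
    have hk := congrArg (fun x => b.repr x k) hint
    simp only [IsDiagonalSchrodingerSolution.repr_weightedAverage hu hT.le hucont,
      IsDiagonalSchrodingerSolution.repr_weightedAverage hv hT.le hvcont] at hk
    refine mul_left_cancel₀ (intervalIntegral_exp_mul_ne_zero ?_ hT.ne') hk
    simpa using hr
  intro t ht
  refine b.repr.injective (lp.ext (funext fun k => ?_))
  rw [hu k t ht, hv k t ht, hinit k]
end

section
/- Let H be a complex separable Hilbert space with Hilbert basis (v_k)_{k∈ℕ}, let λ : ℕ → ℝ, let T > 0, and let r ∈ ℂ with Re r ≠ 0. Let ξ ∈ H with coefficients ξ_k := ⟨v_k, ξ⟩, and define u(t) := Σ_k e^{−i λ_k t} ξ_k v_k. Then the Bochner integral ∫₀ᵀ e^{r t} u(t) dt exists in H and equals Σ_k ζ_k ξ_k v_k, where ζ_k := (e^{(r − i λ_k)T} − 1)/(r − i λ_k). -/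
/-!
Each mode only picks up the phase `e^{-iλ_k t}`, so `u(t)` has the same coefficient moduli as `ξ`
and hence `‖u(t)‖ = ‖ξ‖`; as a pointwise limit of continuous partial sums it is also strongly
measurable, so `e^{rt} u(t)` is integrable on `[0, T]`. The coefficient functionals `⟪v_k, ·⟫`
commute with the integral, which reduces the `k`-th coefficient of the integral to the scalar
integral `∫₀ᵀ e^{(r - iλ_k)t} dt · ξ_k = ζ_k ξ_k`, valid since `Re r ≠ 0` forces `r ≠ iλ_k`.
-/

open MeasureTheory Complex

theorem stronglyMeasurable_of_hasSum {α β : Type*} [MeasurableSpace α] [TopologicalSpace β]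
    [TopologicalSpace.PseudoMetrizableSpace β] [AddCommMonoid β] [ContinuousAdd β]
    {f : ℕ → α → β} {g : α → β}
    (hf : ∀ k, StronglyMeasurable (f k)) (hg : ∀ a, HasSum (fun k => f k a) (g a)) :
    StronglyMeasurable g :=
  stronglyMeasurable_of_tendsto (f := fun n a => ∑ k ∈ Finset.range n, f k a) Filter.atTop
    (fun _ => Finset.stronglyMeasurable_fun_sum _ fun k _ => hf k)
    (tendsto_pi_nhds.2 fun a => (hg a).tendsto_sum_nat)

namespace HilbertBasis

variable {ι 𝕜 E : Type*} [RCLike 𝕜] [NormedAddCommGroup E] [InnerProductSpace 𝕜 E]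
  (b : HilbertBasis ι 𝕜 E)

theorem repr_apply_of_hasSum_s5 {c : ι → 𝕜} {x : E} (h : HasSum (fun i => c i • b i) x) (i : ι) :
    b.repr x i = c i := by
  classical
  have hinner := h.mapL (innerSL 𝕜 (b i))
  simp only [innerSL_apply_apply, inner_smul_right, orthonormal_iff_ite.mp b.orthonormal,
    mul_ite, mul_one, mul_zero] at hinner
  rw [b.repr_apply_apply]
  refine hinner.unique ?_
  simpa using hasSum_single (f := fun j => if i = j then c j else 0) i fun j hj => if_neg hj.symm

theorem norm_eq_of_norm_repr_eq {x y : E} (h : ∀ i, ‖b.repr x i‖ = ‖b.repr y i‖) : ‖x‖ = ‖y‖ := by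
  rw [← b.repr.norm_map x, ← b.repr.norm_map y, lp.norm_eq_tsum_rpow, lp.norm_eq_tsum_rpow]
  all_goals simp [h]

end HilbertBasis

def IsSchrodingerEvolution {H : Type*} [NormedAddCommGroup H] [InnerProductSpace ℂ H]
    (b : HilbertBasis ℕ ℂ H) (lam : ℕ → ℝ) (ξ : H) (u : ℝ → H) : Prop :=
  ∀ t : ℝ, HasSum (fun k => (exp (-(I * lam k * t)) * b.repr ξ k) • b k) (u t)

namespace IsSchrodingerEvolution

variable {H : Type*} [NormedAddCommGroup H] [InnerProductSpace ℂ H]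
  {b : HilbertBasis ℕ ℂ H} {lam : ℕ → ℝ} {ξ : H} {u : ℝ → H}

theorem repr_apply (hu : IsSchrodingerEvolution b lam ξ u) (t : ℝ) (k : ℕ) :
    b.repr (u t) k = exp (-(I * lam k * t)) * b.repr ξ k :=
  b.repr_apply_of_hasSum_s5 (hu t) k

theorem norm_apply (hu : IsSchrodingerEvolution b lam ξ u) (t : ℝ) : ‖u t‖ = ‖ξ‖ :=
  b.norm_eq_of_norm_repr_eq fun k => by
    rw [hu.repr_apply, norm_mul, norm_exp, neg_re, mul_re, mul_re]
    simp

theorem stronglyMeasurable (hu : IsSchrodingerEvolution b lam ξ u) : StronglyMeasurable u :=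
  stronglyMeasurable_of_hasSum (fun k => by fun_prop) hu

theorem intervalIntegrable_exp_smul (hu : IsSchrodingerEvolution b lam ξ u) (r : ℂ) (a c : ℝ) :
    IntervalIntegrable (fun t : ℝ => exp (r * t) • u t) volume a c :=
  have hu_int : IntervalIntegrable u volume a c :=
    (intervalIntegrable_const (c := ‖ξ‖)).mono_fun'
      hu.stronglyMeasurable.aestronglyMeasurable
      (Filter.Eventually.of_forall fun t => (hu.norm_apply t).le)
  hu_int.continuousOn_smul (by fun_prop)

theorem repr_integral_exp_smul [CompleteSpace H] (hu : IsSchrodingerEvolution b lam ξ u) {r : ℂ}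
    (hr : r.re ≠ 0) (T : ℝ) (k : ℕ) :
    b.repr (∫ t in (0:ℝ)..T, exp (r * t) • u t) k =
      (exp ((r - I * lam k) * T) - 1) / (r - I * lam k) * b.repr ξ k := by
  have hne : r - I * lam k ≠ 0 := fun h => hr (by simpa using congrArg re h)
  calc b.repr (∫ t in (0:ℝ)..T, exp (r * t) • u t) k
      = ∫ t in (0:ℝ)..T, b.repr (exp (r * t) • u t) k := by
        simp only [b.repr_apply_apply, ← innerSL_apply_apply ℂ]
        exact ((innerSL ℂ (b k)).intervalIntegral_comp_comm
          (hu.intervalIntegrable_exp_smul r 0 T)).symm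
    _ = ∫ t in (0:ℝ)..T, exp ((r - I * lam k) * t) * b.repr ξ k := by
        congr 1
        ext t
        rw [map_smul, lp.coeFn_smul, Pi.smul_apply, hu.repr_apply, smul_eq_mul,
          ← mul_assoc, ← exp_add]
        ring_nf
    _ = _ := by
        rw [intervalIntegral.integral_mul_const, integral_exp_mul_complex hne]
        simp

end IsSchrodingerEvolution

theorem stmt_5_general {H : Type*} [NormedAddCommGroup H] [InnerProductSpace ℂ H] [CompleteSpace H]
    (b : HilbertBasis ℕ ℂ H) (lam : ℕ → ℝ) (T : ℝ)
    (r : ℂ) (hr : r.re ≠ 0) (ξ : H) (u : ℝ → H)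
    (hu : ∀ t : ℝ,
      HasSum (fun k => (Complex.exp (-(Complex.I * lam k * t)) * b.repr ξ k) • b k) (u t)) :
    IntervalIntegrable (fun t : ℝ => Complex.exp (r * t) • u t) volume 0 T ∧
    HasSum
      (fun k =>
        (((Complex.exp ((r - Complex.I * lam k) * T) - 1) / (r - Complex.I * lam k)) *
          b.repr ξ k) • b k)
      (∫ t in (0:ℝ)..T, Complex.exp (r * t) • u t) := by
  have hu : IsSchrodingerEvolution b lam ξ u := hu
  refine ⟨hu.intervalIntegrable_exp_smul r 0 T, ?_⟩
  convert b.hasSum_repr _ using 3 with k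
  exact (hu.repr_integral_exp_smul hr T k).symm

/-- the weighted time-average of the Schrödinger evolution
`u(t) = Σ_k e^{-iλ_k t} ξ_k v_k` exists as a Bochner integral and equals
`Σ_k ζ_k ξ_k v_k` with `ζ_k = (e^{(r - iλ_k)T} - 1)/(r - iλ_k)`. -/
theorem stmt_5 {H : Type*} [NormedAddCommGroup H] [InnerProductSpace ℂ H] [CompleteSpace H]
    (b : HilbertBasis ℕ ℂ H) (lam : ℕ → ℝ) (T : ℝ) (hT : 0 < T)
    (r : ℂ) (hr : r.re ≠ 0) (ξ : H) (u : ℝ → H)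
    (hu : ∀ t : ℝ,
      HasSum (fun k => (Complex.exp (-(Complex.I * lam k * t)) * b.repr ξ k) • b k) (u t)) :
    IntervalIntegrable (fun t : ℝ => Complex.exp (r * t) • u t) volume 0 T ∧
    HasSum
      (fun k =>
        (((Complex.exp ((r - Complex.I * lam k) * T) - 1) / (r - Complex.I * lam k)) *
          b.repr ξ k) • b k)
      (∫ t in (0:ℝ)..T, Complex.exp (r * t) • u t) :=
  stmt_5_general b lam T r hr ξ u hu
end

section
/- Let λ : ℕ → ℝ satisfy λ_k ≥ 1 for all k, let T > 0, and let r ∈ ℂ with Re r ≠ 0. Then there exists a constant ĉ > 0 depending only on r and T such that for every complex sequence (ξ_k)_{k∈ℕ} with Σ_k λ_k |ξ_k|² < ∞, one has Σ_k λ_k² |ζ_k ξ_k|² ≤ ĉ · Σ_k λ_k |ξ_k|², where ζ_k := (e^{(r − i λ_k)T} − 1)/(r − i λ_k). In particular the averaging operator M₀ mapping the initial state ξ = Σ_k ξ_k v_k to μ = Σ_k ζ_k ξ_k v_k = ∫₀ᵀ e^{rt} u(t) dt is continuous from H¹ to H². -/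
/-!
Write `r = a + ib` with `a ≠ 0`. The numerator of `ζ_λ = (e^{(r - iλ)T} - 1)/(r - iλ)` is bounded
by `e^{aT} + 1`, while the denominator satisfies `|r - iλ|² = a² + (λ - b)² ≥ λ / K` for a constant
`K` depending only on `r`. Hence `λ² |ζ_λ|² ≤ (e^{aT} + 1)² K λ`, and the estimate follows termwise.
-/

open Complex

noncomputable def averagingMultiplier (r : ℂ) (T l : ℝ) : ℂ :=
  (exp ((r - I * l) * T) - 1) / (r - I * l)

lemma norm_exp_sub_one_le (z : ℂ) : ‖exp z - 1‖ ≤ Real.exp z.re + 1 := by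
  simpa [norm_exp] using norm_sub_le (exp z) 1

lemma norm_sub_I_mul_sq (r : ℂ) (l : ℝ) : ‖r - I * l‖ ^ 2 = r.re ^ 2 + (l - r.im) ^ 2 := by
  rw [Complex.sq_norm, normSq_apply]
  simp only [sub_re, sub_im, mul_re, mul_im, I_re, I_im, ofReal_re, ofReal_im]
  ring

/-- `λ ≤ |λ - b| + |b|`, with `2|a||λ - b| ≤ a² + (λ - b)²` and `a² ≤ a² + (λ - b)²`. -/
lemma le_mul_norm_sub_I_mul_sq {r : ℂ} (hr : r.re ≠ 0) (l : ℝ) :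
    l ≤ (1 / (2 * |r.re|) + |r.im| / r.re ^ 2) * ‖r - I * l‖ ^ 2 := by
  rw [norm_sub_I_mul_sq]
  set a := r.re
  set b := r.im
  have ha : 0 < |a| := abs_pos.mpr hr
  have ha2 : 0 < a ^ 2 := by positivity
  have hlb : |l - b| ≤ (a ^ 2 + (l - b) ^ 2) / (2 * |a|) := by
    rw [le_div_iff₀ (by positivity)]
    nlinarith [sq_nonneg (|a| - |l - b|), sq_abs a, sq_abs (l - b)]
  have hb : |b| ≤ |b| * (a ^ 2 + (l - b) ^ 2) / a ^ 2 := by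
    rw [le_div_iff₀ ha2]
    exact mul_le_mul_of_nonneg_left (by nlinarith [sq_nonneg (l - b)]) (abs_nonneg b)
  calc l = (l - b) + b := by ring
    _ ≤ |l - b| + |b| := add_le_add (le_abs_self _) (le_abs_self _)
    _ ≤ (a ^ 2 + (l - b) ^ 2) / (2 * |a|) + |b| * (a ^ 2 + (l - b) ^ 2) / a ^ 2 := add_le_add hlb hb
    _ = (1 / (2 * |a|) + |b| / a ^ 2) * (a ^ 2 + (l - b) ^ 2) := by ring

lemma exists_sq_mul_norm_averagingMultiplier_sq_le (T : ℝ) {r : ℂ} (hr : r.re ≠ 0) :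
    ∃ c > 0, ∀ l : ℝ, 0 ≤ l → l ^ 2 * ‖averagingMultiplier r T l‖ ^ 2 ≤ c * l := by
  set K := 1 / (2 * |r.re|) + |r.im| / r.re ^ 2
  set E := Real.exp (r.re * T) + 1
  have hK : 0 < K := by have := abs_pos.mpr hr; positivity
  refine ⟨E ^ 2 * K, by positivity, fun l hl => ?_⟩
  have hd : 0 < ‖r - I * l‖ := norm_pos_iff.mpr fun h => hr (by simpa using congrArg re h)
  have hnum : ‖exp ((r - I * l) * T) - 1‖ ≤ E := by
    simpa [E, mul_re, sub_re, mul_im] using norm_exp_sub_one_le ((r - I * l) * T)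
  have hden : l ≤ K * ‖r - I * l‖ ^ 2 := le_mul_norm_sub_I_mul_sq hr l
  rw [averagingMultiplier, norm_div, div_pow, mul_div_assoc', div_le_iff₀ (by positivity)]
  calc l ^ 2 * ‖exp ((r - I * l) * T) - 1‖ ^ 2
      ≤ l ^ 2 * E ^ 2 := by gcongr
    _ = E ^ 2 * l * l := by ring
    _ ≤ E ^ 2 * l * (K * ‖r - I * l‖ ^ 2) := by gcongr
    _ = E ^ 2 * K * l * ‖r - I * l‖ ^ 2 := by ring

theorem stmt_8_general (T : ℝ) (r : ℂ) (hr : r.re ≠ 0) :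
    ∃ c > 0, ∀ (lam : ℕ → ℝ), (∀ k, 1 ≤ lam k) →
      ∀ ξ : ℕ → ℂ, Summable (fun k => lam k * ‖ξ k‖ ^ 2) →
        Summable (fun k => (lam k) ^ 2 *
          ‖((Complex.exp ((r - Complex.I * lam k) * T) - 1) / (r - Complex.I * lam k)) * ξ k‖ ^ 2) ∧
        ∑' k, (lam k) ^ 2 *
            ‖((Complex.exp ((r - Complex.I * lam k) * T) - 1) / (r - Complex.I * lam k)) * ξ k‖ ^ 2 ≤
          c * ∑' k, lam k * ‖ξ k‖ ^ 2 := by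
  obtain ⟨c, hc, hbound⟩ := exists_sq_mul_norm_averagingMultiplier_sq_le T hr
  refine ⟨c, hc, fun lam hlam ξ hsum => ?_⟩
  have hle : ∀ k, lam k ^ 2 * ‖averagingMultiplier r T (lam k) * ξ k‖ ^ 2 ≤
      c * (lam k * ‖ξ k‖ ^ 2) := fun k => by
    rw [norm_mul, mul_pow, ← mul_assoc, ← mul_assoc]
    exact mul_le_mul_of_nonneg_right (hbound _ (zero_le_one.trans (hlam k))) (by positivity)
  have hS := (hsum.mul_left c).of_nonneg_of_le (fun k => by positivity) hle
  exact ⟨hS, (hS.tsum_le_tsum hle (hsum.mul_left c)).trans_eq tsum_mul_left⟩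

/-- forward continuity of the averaging operator `M₀ : H¹ → H²`.
With `ζ_k = (e^{(r - iλ_k)T} - 1)/(r - iλ_k)`, there is `ĉ > 0` depending only on `r`
and `T` such that for every eigenvalue sequence `λ_k ≥ 1` and every complex sequence
`(ξ_k)` with `Σ λ_k |ξ_k|² < ∞`, we have `Σ λ_k² |ζ_k ξ_k|² ≤ ĉ Σ λ_k |ξ_k|²`. -/
theorem stmt_8 (T : ℝ) (hT : 0 < T) (r : ℂ) (hr : r.re ≠ 0) :
    ∃ c > 0, ∀ (lam : ℕ → ℝ), (∀ k, 1 ≤ lam k) →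
      ∀ ξ : ℕ → ℂ, Summable (fun k => lam k * ‖ξ k‖ ^ 2) →
        Summable (fun k => (lam k) ^ 2 *
          ‖((Complex.exp ((r - Complex.I * lam k) * T) - 1) / (r - Complex.I * lam k)) * ξ k‖ ^ 2) ∧
        ∑' k, (lam k) ^ 2 *
            ‖((Complex.exp ((r - Complex.I * lam k) * T) - 1) / (r - Complex.I * lam k)) * ξ k‖ ^ 2 ≤
          c * ∑' k, lam k * ‖ξ k‖ ^ 2 :=
  stmt_8_general T r hr
end

section
/- Let H be a complex separable Hilbert space with Hilbert basis (v_k)_{k∈ℕ}, let λ : ℕ → ℝ satisfy λ_k ≥ 1 for all k, let T > 0, and let r ∈ ℂ with Re r ≠ 0. Let μ ∈ H with coefficients γ_k := ⟨v_k, μ⟩ satisfy Σ_k λ_k² |γ_k|² < ∞. Then for each t ∈ [0,T] the series u(t) := Σ_k ((r − i λ_k)/(e^{(r − i λ_k)T} − 1)) γ_k e^{−i λ_k t} v_k converges in H, the map t ↦ u(t) is continuous from [0,T] to H, and ∫₀ᵀ e^{r t} u(t) dt = μ (Bochner integral in H). -/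
/-!
Mode by mode: with `z = r - iλ`, `∫₀ᵀ e^{rt} e^{-iλt} dt = (e^{zT} - 1)/z`, which the multiplier
`z/(e^{zT} - 1)` cancels; the denominator never vanishes because `|e^{zT}| = e^{T Re r} ≠ 1`.
The same modulus bound shows that the multiplier is `O(λ)`, so the coefficients of `u(t)` are
dominated, uniformly in `t`, by the square-summable sequence `C λ_k |γ_k|`. Dominated convergence
for series then makes the coefficient curve continuous in `ℓ²`, and `u` is its image under the
isometry `ℓ² ≃ H` of the Hilbert basis; the integral identity is checked coefficientwise.
-/

open Filter Topology
open scoped ENNReal lp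

theorem lp.continuousOn_of_dominated {α : Type*} {E : α → Type*}
    [∀ i, NormedAddCommGroup (E i)] {p : ℝ≥0∞} [Fact (1 ≤ p)] (hp : p ≠ ∞)
    {X : Type*} [TopologicalSpace X] {F : X → lp E p} {s : Set X} {M : α → ℝ} (hM : Memℓp M p)
    (hF : ∀ i, ContinuousOn (fun x => F x i) s) (hFM : ∀ i, ∀ x ∈ s, ‖F x i‖ ≤ M i) :
    ContinuousOn F s := by
  intro x₀ hx₀
  have hq : 0 < p.toReal := ENNReal.toReal_pos (zero_lt_one.trans_le Fact.out).ne' hp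
  have hsum : Tendsto (fun x => ∑' i, ‖(F x - F x₀) i‖ ^ p.toReal) (𝓝[s] x₀) (𝓝 0) := by
    have hlim : ∀ i, Tendsto (fun x => ‖(F x - F x₀) i‖ ^ p.toReal) (𝓝[s] x₀) (𝓝 0) := by
      intro i
      have h := (tendsto_iff_norm_sub_tendsto_zero.1 (hF i x₀ hx₀)).rpow_const (Or.inr hq.le)
      simpa [Real.zero_rpow hq.ne'] using h
    have hbound : ∀ᶠ x in 𝓝[s] x₀, ∀ i,
        ‖‖(F x - F x₀) i‖ ^ p.toReal‖ ≤ ‖2 * M i‖ ^ p.toReal := by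
      filter_upwards [self_mem_nhdsWithin] with x hx i
      rw [Real.norm_of_nonneg (by positivity)]
      gcongr
      calc ‖(F x - F x₀) i‖ ≤ ‖F x i‖ + ‖F x₀ i‖ := norm_sub_le _ _
        _ ≤ M i + M i := add_le_add (hFM i x hx) (hFM i x₀ hx₀)
        _ ≤ ‖2 * M i‖ := by rw [← two_mul]; exact Real.le_norm_self _
    simpa using tendsto_tsum_of_dominated_convergence ((hM.const_mul 2).summable hq) hlim hbound
  rw [ContinuousWithinAt, tendsto_iff_norm_sub_tendsto_zero]
  simp_rw [lp.norm_eq_tsum_rpow hq]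
  have h := hsum.rpow_const (p := 1 / p.toReal) (Or.inr (by positivity))
  rwa [Real.zero_rpow (one_div_pos.2 hq).ne'] at h

theorem HilbertBasis.repr_intervalIntegral_apply {ι 𝕜 E : Type*} [RCLike 𝕜]
    [NormedAddCommGroup E] [InnerProductSpace 𝕜 E] [NormedSpace ℝ E] [CompleteSpace E]
    (b : HilbertBasis ι 𝕜 E) {f : ℝ → E} {a a' : ℝ} {μ : MeasureTheory.Measure ℝ}
    (hf : IntervalIntegrable f μ a a') (i : ι) :
    b.repr (∫ t in a..a', f t ∂μ) i = ∫ t in a..a', b.repr (f t) i ∂μ := by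
  simpa only [b.repr_apply_apply, innerSL_apply_apply] using
    ((innerSL 𝕜 (b i)).intervalIntegral_comp_comm hf).symm

namespace Complex

theorem abs_exp_re_sub_one_le (z : ℂ) : |Real.exp z.re - 1| ≤ ‖exp z - 1‖ := by
  simpa [norm_exp] using abs_norm_sub_norm_le (exp z) 1

theorem exp_ne_one_of_re_ne_zero {z : ℂ} (hz : z.re ≠ 0) : exp z ≠ 1 := by
  intro h
  have h' := abs_exp_re_sub_one_le z
  rw [h, sub_self, norm_zero, abs_nonpos_iff, sub_eq_zero, Real.exp_eq_one_iff] at h'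
  exact hz h'

theorem integral_mul_exp_div_exp_sub_one {z : ℂ} (hz : z ≠ 0) {T : ℝ} (hzT : exp (z * T) ≠ 1) :
    ∫ t in (0 : ℝ)..T, z / (exp (z * T) - 1) * exp (z * t) = 1 := by
  rw [intervalIntegral.integral_const_mul, integral_exp_mul_complex hz]
  field_simp [sub_ne_zero.2 hzT]
  simp

end Complex

open Complex

-- the coefficient of `v_k` in `u(t)`, for `x = λ_k` and `γ = γ_k`
noncomputable def nonlocalSolutionCoeff (r : ℂ) (T x : ℝ) (γ : ℂ) (t : ℝ) : ℂ :=
  (r - I * x) / (exp ((r - I * x) * T) - 1) * γ * exp (-(I * x * t))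

section nonlocalSolutionCoeff

variable {r : ℂ} {T : ℝ}

theorem norm_nonlocalSolutionCoeff_le (hrT : r.re * T ≠ 0) {x : ℝ} (hx : 1 ≤ x) (γ : ℂ) (t : ℝ) :
    ‖nonlocalSolutionCoeff r T x γ t‖ ≤ (‖r‖ + 1) / |Real.exp (r.re * T) - 1| * (x * ‖γ‖) := by
  have hden : 0 < |Real.exp (r.re * T) - 1| := by
    simpa [sub_eq_zero, Real.exp_eq_one_iff] using hrT
  have hnum : ‖r - I * x‖ ≤ (‖r‖ + 1) * x := by
    calc ‖r - I * x‖ ≤ ‖r‖ + x := by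
          simpa [abs_of_pos (one_pos.trans_le hx)] using norm_sub_le r (I * x)
      _ ≤ (‖r‖ + 1) * x := by nlinarith [norm_nonneg r]
  have hmult : ‖(r - I * x) / (exp ((r - I * x) * T) - 1)‖
      ≤ (‖r‖ + 1) * x / |Real.exp (r.re * T) - 1| := by
    rw [norm_div]
    refine div_le_div₀ (by positivity) hnum hden ?_
    simpa using abs_exp_re_sub_one_le ((r - I * x) * T)
  have h_unit : ‖exp (-(I * x * t))‖ = 1 := by simp [norm_exp]
  calc ‖nonlocalSolutionCoeff r T x γ t‖
      = ‖(r - I * x) / (exp ((r - I * x) * T) - 1)‖ * ‖γ‖ := by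
        simp only [nonlocalSolutionCoeff, norm_mul, h_unit, mul_one]
    _ ≤ (‖r‖ + 1) * x / |Real.exp (r.re * T) - 1| * ‖γ‖ := by gcongr
    _ = _ := by ring

theorem continuous_nonlocalSolutionCoeff (x : ℝ) (γ : ℂ) :
    Continuous (nonlocalSolutionCoeff r T x γ) := by
  unfold nonlocalSolutionCoeff
  fun_prop

theorem integral_exp_mul_nonlocalSolutionCoeff (hrT : r.re * T ≠ 0) (x : ℝ) (γ : ℂ) :
    ∫ t in (0 : ℝ)..T, exp (r * t) * nonlocalSolutionCoeff r T x γ t = γ := by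
  have hz : r - I * x ≠ 0 := fun h => left_ne_zero_of_mul hrT (by simpa using congrArg re h)
  have hzT : exp ((r - I * x) * T) ≠ 1 := exp_ne_one_of_re_ne_zero (by simpa using hrT)
  have h_exp : ∀ t : ℝ, exp (r * t) * nonlocalSolutionCoeff r T x γ t =
      γ * ((r - I * x) / (exp ((r - I * x) * T) - 1) * exp ((r - I * x) * t)) := fun t => by
    calc exp (r * t) * nonlocalSolutionCoeff r T x γ t
        = γ * ((r - I * x) / (exp ((r - I * x) * T) - 1) * (exp (r * t) * exp (-(I * x * t)))) := by
          simp only [nonlocalSolutionCoeff]; ring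
      _ = _ := by rw [← exp_add, ← neg_mul, ← add_mul, ← sub_eq_add_neg]
  simp_rw [h_exp]
  rw [intervalIntegral.integral_const_mul, integral_mul_exp_div_exp_sub_one hz hzT, mul_one]

end nonlocalSolutionCoeff

/-- Remark 1, explicit solution formula.  For `μ` with
`Σ_k λ_k² |γ_k|² < ∞` (`γ_k = ⟨v_k, μ⟩`), the series
`u(t) = Σ_k ((r - iλ_k)/(e^{(r - iλ_k)T} - 1)) γ_k e^{-iλ_k t} v_k` converges in `H`
for each `t ∈ [0,T]`, `u` is continuous on `[0,T]`, and `∫₀ᵀ e^{rt} u(t) dt = μ`. -/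
theorem stmt_10 {H : Type*} [NormedAddCommGroup H] [InnerProductSpace ℂ H] [CompleteSpace H]
    (b : HilbertBasis ℕ ℂ H) (lam : ℕ → ℝ) (hlam : ∀ k, 1 ≤ lam k)
    (T : ℝ) (hT : 0 < T) (r : ℂ) (hr : r.re ≠ 0) (μ : H)
    (hμ : Summable (fun k => lam k ^ 2 * ‖b.repr μ k‖ ^ 2)) :
    ∃ u : ℝ → H,
      (∀ t ∈ Set.Icc (0:ℝ) T, HasSum (fun k =>
        (((r - Complex.I * lam k) / (Complex.exp ((r - Complex.I * lam k) * T) - 1)) *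
          b.repr μ k * Complex.exp (-(Complex.I * lam k * t))) • b k) (u t)) ∧
      ContinuousOn u (Set.Icc 0 T) ∧
      (∫ t in (0:ℝ)..T, Complex.exp (r * t) • u t) = μ := by
  have hrT : r.re * T ≠ 0 := mul_ne_zero hr hT.ne'
  set c : ℕ → ℝ → ℂ := fun k => nonlocalSolutionCoeff r T (lam k) (b.repr μ k)
  set M : ℕ → ℝ := fun k => (‖r‖ + 1) / |Real.exp (r.re * T) - 1| * (lam k * ‖b.repr μ k‖)
  have hc_le : ∀ k t, ‖c k t‖ ≤ M k := fun k t => norm_nonlocalSolutionCoeff_le hrT (hlam k) _ t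
  have hM : Memℓp M 2 := by
    refine (memℓp_gen ?_).const_mul _
    simpa [norm_mul, mul_pow] using hμ
  let F : ℝ → ℓ²(ℕ, ℂ) := fun t => ⟨fun k => c k t, hM.mono fun k => hc_le k t⟩
  have hF : Continuous F := continuousOn_univ.1 <|
    lp.continuousOn_of_dominated ENNReal.ofNat_ne_top hM
      (fun k => (continuous_nonlocalSolutionCoeff _ _).continuousOn) fun k t _ => hc_le k t
  have hu : Continuous fun t => b.repr.symm (F t) := b.repr.symm.continuous.comp hF
  refine ⟨fun t => b.repr.symm (F t), fun t _ => b.hasSum_repr_symm (F t), hu.continuousOn, ?_⟩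
  refine b.repr.injective (lp.ext (funext fun k => ?_))
  have h_int : Continuous fun t : ℝ => exp (r * t) • b.repr.symm (F t) := by fun_prop
  rw [b.repr_intervalIntegral_apply (h_int.intervalIntegrable _ _)]
  simpa [F, c] using integral_exp_mul_nonlocalSolutionCoeff hrT (lam k) (b.repr μ k)
end
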